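/- arXiv:1210.1804 — 3 statements merged into one kernel-verified Lean document; each statement's English description precedes it below -/
import Mathlib

section
/- Fix α > 2, ε > 0, r = (1+ε)^{-1/α}, β = 1, 𝒩 = 1. There exists a constant d (depending only on α, ε) such that: if A is a finite set of at most n transmitters that is d·d_α(n)-diluted with respect to the grid of side x = γ/c (γ = r/√2, c ≥ 2 an integer) with at most one transmitter per box, then for every v ∈ A and every point u with dist(v,u) ≤ 2r/c, the SINR inequality (2r/c)^{-α} ≥ 𝒩 + ∑_{w∈A∖{v}} dist(w,u)^{-α} holds; i.e., every transmitter in A is (2r/c)-successful when all of A transmits simultaneously with unit power. -/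
/-!
Dilution makes the grid index of every other transmitter `w` differ from that of `v` by `D • k`
with `0 ≠ k ∈ ℤ²`, and distinct transmitters give distinct `k`. Such a `w` is at distance about
`D‖k‖x` from `v`, hence at least `D‖k‖x/2` from any `u` within `2r/c ≤ 3x` of `v`, so the
interference at `u` is at most `(Dx/2)^{-α} ∑_{k ∈ ℤ²} ‖k‖^{-α}`, a convergent lattice sum as
`α > 2`. Since `Dx/2 ≥ (2r/c)·D/6`, for `D` large this is at most `(2r/c)^{-α} ε/(1+ε)`, and
`(2r/c)^{-α} ≥ r^{-α} = 1 + ε` leaves room for the noise term `1`.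
-/

open Filter Topology Finset

noncomputable def dist2 (p q : ℝ × ℝ) : ℝ :=
  Real.sqrt ((p.1 - q.1) ^ 2 + (p.2 - q.2) ^ 2)

noncomputable def boxIdx (x : ℝ) (p : ℝ × ℝ) : ℤ × ℤ :=
  (⌊p.1 / x⌋, ⌊p.2 / x⌋)

lemma dist2_eq_dist_toLp (p q : ℝ × ℝ) :
    dist2 p q = dist (WithLp.toLp 2 p) (WithLp.toLp 2 q) := by
  simp [WithLp.prod_dist_eq_of_L2, dist2, Real.dist_eq, sq_abs]

lemma dist2_comm (p q : ℝ × ℝ) : dist2 p q = dist2 q p := by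
  simp only [dist2_eq_dist_toLp, dist_comm]

lemma dist2_triangle (p q r : ℝ × ℝ) : dist2 p r ≤ dist2 p q + dist2 q r := by
  simp only [dist2_eq_dist_toLp, dist_triangle]

lemma dist_le_dist2 (p q : ℝ × ℝ) : dist p q ≤ dist2 p q := by
  rw [Prod.dist_eq, Real.dist_eq, Real.dist_eq, dist2, ← Real.sqrt_sq_eq_abs,
    ← Real.sqrt_sq_eq_abs]
  exact max_le (Real.sqrt_le_sqrt (le_add_of_nonneg_right (sq_nonneg _)))
    (Real.sqrt_le_sqrt (le_add_of_nonneg_left (sq_nonneg _)))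

lemma norm_floor_sub_floor_le (s t : ℝ) : ‖⌊s⌋ - ⌊t⌋‖ ≤ dist s t + 1 := by
  rw [Int.norm_eq_abs, Real.dist_eq, Int.cast_sub, abs_le]
  constructor <;> linarith [Int.floor_le s, Int.floor_le t, Int.sub_one_lt_floor s,
    Int.sub_one_lt_floor t, le_abs_self (s - t), neg_abs_le (s - t)]

lemma norm_boxIdx_sub_le {x : ℝ} (hx : 0 < x) (p q : ℝ × ℝ) :
    ‖boxIdx x p - boxIdx x q‖ ≤ dist p q / x + 1 := by
  have hcoord (a b : ℝ) : ‖⌊a / x⌋ - ⌊b / x⌋‖ ≤ dist a b / x + 1 := by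
    refine (norm_floor_sub_floor_le _ _).trans_eq ?_
    rw [Real.dist_eq, Real.dist_eq, ← sub_div, abs_div, abs_of_pos hx]
  rw [Prod.norm_def, Prod.dist_eq]
  refine max_le ((hcoord p.1 q.1).trans ?_) ((hcoord p.2 q.2).trans ?_) <;> gcongr
  exacts [le_max_left _ _, le_max_right _ _]

lemma summable_norm_rpow_neg_intProd {s : ℝ} (hs : 2 < s) :
    Summable fun p : ℤ × ℤ => ‖p‖ ^ (-s) := by
  refine ((finTwoArrowEquiv ℤ).symm.summable_iff.mpr
    (EisensteinSeries.summable_one_div_norm_rpow hs)).congr fun p => ?_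
  simp [EisensteinSeries.norm_eq_max_natAbs, Prod.norm_def, Int.norm_eq_abs]

lemma one_le_norm_intProd_of_ne_zero {k : ℤ × ℤ} (hk : k ≠ 0) : 1 ≤ ‖k‖ := by
  rw [Prod.norm_def]
  rcases k with ⟨k₁, k₂⟩
  by_cases h₁ : k₁ = 0
  · have h₂ : k₂ ≠ 0 := fun h₂ => hk (by simp [h₁, h₂])
    exact le_max_of_le_right (by rw [Int.norm_eq_abs]; exact_mod_cast Int.one_le_abs h₂)
  · exact le_max_of_le_left (by rw [Int.norm_eq_abs]; exact_mod_cast Int.one_le_abs h₁)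

def IsDiluted (x : ℝ) (D : ℕ) (A : Finset (ℝ × ℝ)) : Prop :=
  ∀ p ∈ A, ∀ q ∈ A, (D : ℤ) ∣ (boxIdx x p).1 - (boxIdx x q).1 ∧
    (D : ℤ) ∣ (boxIdx x p).2 - (boxIdx x q).2

lemma IsDiluted.exists_smul_eq {x : ℝ} {D : ℕ} {A : Finset (ℝ × ℝ)} (h : IsDiluted x D A)
    {v : ℝ × ℝ} (hv : v ∈ A) :
    ∃ k : ℝ × ℝ → ℤ × ℤ, ∀ w ∈ A, boxIdx x w - boxIdx x v = (D : ℤ) • k w := by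
  refine ⟨fun w => Prod.map (· / (D : ℤ)) (· / (D : ℤ)) (boxIdx x w - boxIdx x v),
    fun w hw => ?_⟩
  obtain ⟨h₁, h₂⟩ := h w hw v hv
  ext
  · exact (Int.mul_ediv_cancel' h₁).symm
  · exact (Int.mul_ediv_cancel' h₂).symm

lemma dist2_rpow_neg_le {x α : ℝ} (hx : 0 < x) (hα : 0 ≤ α) {D : ℕ} (hD : 8 ≤ D)
    {v w u : ℝ × ℝ} {k : ℤ × ℤ} (hk : k ≠ 0) (hwv : boxIdx x w - boxIdx x v = (D : ℤ) • k)
    (hu : dist2 v u ≤ 3 * x) :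
    dist2 w u ^ (-α) ≤ (D * x / 2) ^ (-α) * ‖k‖ ^ (-α) := by
  have hDk : 8 ≤ (D : ℝ) * ‖k‖ := by
    have : (8 : ℝ) ≤ D := by exact_mod_cast hD
    nlinarith [one_le_norm_intProd_of_ne_zero hk]
  have hwv_far : (D : ℝ) * ‖k‖ * x ≤ dist2 w v + x := by
    have : (D : ℝ) * ‖k‖ ≤ dist2 w v / x + 1 :=
      calc (D : ℝ) * ‖k‖ = ‖boxIdx x w - boxIdx x v‖ := by rw [hwv, norm_smul, Int.norm_natCast]
        _ ≤ dist w v / x + 1 := norm_boxIdx_sub_le hx w v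
        _ ≤ dist2 w v / x + 1 := by gcongr; exact dist_le_dist2 w v
    rwa [div_add_one hx.ne', le_div_iff₀ hx] at this
  have hwu_far : D * x / 2 * ‖k‖ ≤ dist2 w u := by
    have := dist2_triangle w u v
    rw [dist2_comm u v] at this
    nlinarith [mul_le_mul_of_nonneg_right hDk hx.le]
  calc dist2 w u ^ (-α) ≤ (D * x / 2 * ‖k‖) ^ (-α) :=
        Real.rpow_le_rpow_of_nonpos (by positivity) hwu_far (by linarith)
    _ = (D * x / 2) ^ (-α) * ‖k‖ ^ (-α) := Real.mul_rpow (by positivity) (norm_nonneg _)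

theorem sum_dist2_rpow_neg_le {x α : ℝ} (hx : 0 < x) (hα : 2 < α) {D : ℕ} (hD : 8 ≤ D)
    {A : Finset (ℝ × ℝ)} (hdil : IsDiluted x D A) (hinj : Set.InjOn (boxIdx x) A)
    {v u : ℝ × ℝ} (hv : v ∈ A) (hu : dist2 v u ≤ 3 * x) :
    ∑ w ∈ A.erase v, dist2 w u ^ (-α) ≤ (D * x / 2) ^ (-α) * ∑' p : ℤ × ℤ, ‖p‖ ^ (-α) := by
  obtain ⟨k, hk⟩ := hdil.exists_smul_eq hv
  have hk_ne : ∀ w ∈ A.erase v, k w ≠ 0 := fun w hw h =>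
    ne_of_mem_erase hw <| hinj (mem_of_mem_erase hw) hv <|
      sub_eq_zero.mp (by rw [hk w (mem_of_mem_erase hw), h, smul_zero])
  have hk_inj : Set.InjOn k (A.erase v) := fun w hw w' hw' h =>
    hinj (mem_of_mem_erase hw) (mem_of_mem_erase hw') <| sub_left_inj.mp <|
      (hk w (mem_of_mem_erase hw)).trans (h ▸ (hk w' (mem_of_mem_erase hw')).symm)
  calc ∑ w ∈ A.erase v, dist2 w u ^ (-α)
      ≤ ∑ w ∈ A.erase v, (D * x / 2) ^ (-α) * ‖k w‖ ^ (-α) :=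
        sum_le_sum fun w hw => dist2_rpow_neg_le hx (by linarith) hD (hk_ne w hw)
          (hk w (mem_of_mem_erase hw)) hu
    _ = (D * x / 2) ^ (-α) * ∑ p ∈ (A.erase v).image k, ‖p‖ ^ (-α) := by
        rw [← mul_sum, sum_image hk_inj]
    _ ≤ (D * x / 2) ^ (-α) * ∑' p : ℤ × ℤ, ‖p‖ ^ (-α) := by
        gcongr
        exact (summable_norm_rpow_neg_intProd hα).sum_le_tsum _ fun _ _ => by positivity

lemma eventually_div_rpow_neg_mul_le {a α δ : ℝ} (ha : 0 < a) (hα : 0 < α) (Z : ℝ)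
    (hδ : 0 < δ) : ∀ᶠ t in atTop, (t / a) ^ (-α) * Z ≤ δ := by
  have : Tendsto (fun t => (t / a) ^ (-α) * Z) atTop (𝓝 0) := by
    simpa using ((tendsto_rpow_neg_atTop hα).comp (tendsto_id.atTop_div_const ha)).mul_const Z
  exact this.eventually (ge_mem_nhds hδ)

lemma one_add_le_rpow_neg {α ε L : ℝ} (hα : 0 < α) (hε : 0 < ε) (hL : 0 < L)
    (hLr : L ≤ (1 + ε) ^ (-(1 / α))) : 1 + ε ≤ L ^ (-α) := by
  calc 1 + ε = ((1 + ε) ^ (-(1 / α))) ^ (-α) := by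
        rw [← Real.rpow_mul (by positivity), neg_mul_neg, one_div_mul_cancel hα.ne',
          Real.rpow_one]
    _ ≤ L ^ (-α) := Real.rpow_le_rpow_of_nonpos hL hLr (by linarith)

lemma rpow_neg_mul_div_two_le {x L D α : ℝ} (hL : 0 < L) (hLx : L ≤ 3 * x) (hD : 0 < D)
    (hα : 0 ≤ α) : (D * x / 2) ^ (-α) ≤ L ^ (-α) * (D / 6) ^ (-α) := by
  rw [← Real.mul_rpow hL.le (by positivity)]
  exact Real.rpow_le_rpow_of_nonpos (by positivity) (by nlinarith) (by linarith)

lemma one_add_le_of_le_mul_div {ε M S : ℝ} (hε : 0 < ε) (hM : 1 + ε ≤ M)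
    (hS : S ≤ M * (ε / (1 + ε))) : 1 + S ≤ M := by
  have h₁ : 1 ≤ M / (1 + ε) := (one_le_div (by positivity)).mpr hM
  have h₂ : M * (ε / (1 + ε)) = M - M / (1 + ε) := by field_simp; ring
  linarith

lemma two_mul_div_le_three_mul_div_sqrt_two {r c : ℝ} (hr : 0 < r) (hc : 0 < c) :
    2 * r / c ≤ 3 * (r / (√2 * c)) := by
  have hsqrt : √2 * 2 ≤ 3 := by nlinarith [Real.sq_sqrt (show (0 : ℝ) ≤ 2 by norm_num)]
  rw [mul_div_assoc', div_le_div_iff₀ hc (by positivity)]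
  nlinarith [mul_pos hr hc]

lemma one_le_sum_Icc_rpow {n : ℕ} (hn : 1 ≤ n) (s : ℝ) :
    1 ≤ ∑ i ∈ Icc 1 n, (i : ℝ) ^ s := by
  simpa using single_le_sum (f := fun i : ℕ => (i : ℝ) ^ s) (fun i _ => by positivity)
    (mem_Icc.mpr ⟨le_rfl, hn⟩)

/-- Fix α > 2, ε > 0, r = (1+ε)^{-1/α}, γ = r/√2, β = 𝒩 = 1.  There is a
constant d (depending only on α, ε) such that whenever a set A of at most n
unit-power transmitters is D-diluted, with D ≥ d·d_α(n), with respect to the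
grid of side x = γ/c (c ≥ 2 an integer) with at most one transmitter per box,
then every transmitter v ∈ A is (2r/c)-successful: for every point u with
dist(v,u) ≤ 2r/c we have (2r/c)^{-α} ≥ 𝒩 + ∑_{w ∈ A \ {v}} dist(w,u)^{-α}. -/
theorem stmt_5 (α ε : ℝ) (hα : 2 < α) (hε : 0 < ε) :
    ∃ d : ℝ, 0 < d ∧
      ∀ n : ℕ, ∀ c : ℕ, 2 ≤ c → ∀ D : ℕ,
      (D : ℝ) ≥ d * (∑ i ∈ Finset.Icc 1 n, (i : ℝ) ^ (1 - α)) →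
      ∀ A : Finset (ℝ × ℝ), A.card ≤ n →
      (∀ p ∈ A, ∀ q ∈ A,
        (D : ℤ) ∣ ((boxIdx ((1 + ε) ^ (-(1 / α)) / (Real.sqrt 2 * c)) p).1 -
                   (boxIdx ((1 + ε) ^ (-(1 / α)) / (Real.sqrt 2 * c)) q).1) ∧
        (D : ℤ) ∣ ((boxIdx ((1 + ε) ^ (-(1 / α)) / (Real.sqrt 2 * c)) p).2 -
                   (boxIdx ((1 + ε) ^ (-(1 / α)) / (Real.sqrt 2 * c)) q).2)) →
      (∀ p ∈ A, ∀ q ∈ A,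
        boxIdx ((1 + ε) ^ (-(1 / α)) / (Real.sqrt 2 * c)) p =
          boxIdx ((1 + ε) ^ (-(1 / α)) / (Real.sqrt 2 * c)) q → p = q) →
      ∀ v ∈ A, ∀ u : ℝ × ℝ,
        dist2 v u ≤ 2 * (1 + ε) ^ (-(1 / α)) / c →
        (2 * (1 + ε) ^ (-(1 / α)) / c) ^ (-α) ≥
          1 + ∑ w ∈ A.erase v, (dist2 w u) ^ (-α) := by
  have hα₀ : 0 < α := by linarith
  set Z := ∑' p : ℤ × ℤ, ‖p‖ ^ (-α)
  obtain ⟨d₀, hd₀⟩ := eventually_atTop.mp <| eventually_div_rpow_neg_mul_le (a := 6)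
    (by norm_num) hα₀ Z (by positivity : 0 < ε / (1 + ε))
  refine ⟨max 8 d₀, by positivity, ?_⟩
  intro n c hc D hD A hcard hdil hinj v hv u hu
  set r := (1 + ε) ^ (-(1 / α))
  set x := r / (√2 * c)
  set L := 2 * r / c
  have hc₂ : (2 : ℝ) ≤ c := by exact_mod_cast hc
  have hr₀ : 0 < r := by positivity
  have hL₀ : 0 < L := by positivity
  have hL3x : L ≤ 3 * x := two_mul_div_le_three_mul_div_sqrt_two hr₀ (by positivity)
  have hDd : max 8 d₀ ≤ D := le_trans (le_mul_of_one_le_right (by positivity)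
    (one_le_sum_Icc_rpow ((card_pos.mpr ⟨v, hv⟩).trans_le hcard) _)) hD
  have hD₈ : (8 : ℝ) ≤ D := (le_max_left _ _).trans hDd
  have hL : 1 + ε ≤ L ^ (-α) :=
    one_add_le_rpow_neg hα₀ hε hL₀ (by rw [div_le_iff₀ (by positivity)]; nlinarith)
  refine ge_iff_le.mpr <| one_add_le_of_le_mul_div hε hL <|
    (sum_dist2_rpow_neg_le (by positivity) hα (by exact_mod_cast hD₈) hdil
      (fun p hp q hq => hinj p hp q hq) hv (hu.trans hL3x)).trans ?_
  calc (D * x / 2) ^ (-α) * Z ≤ L ^ (-α) * (D / 6) ^ (-α) * Z := by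
        gcongr
        exact rpow_neg_mul_div_two_le hL₀ hL3x (by positivity) hα₀.le
    _ ≤ L ^ (-α) * (ε / (1 + ε)) := by
        rw [mul_assoc]
        gcongr
        exact hd₀ D ((le_max_right _ _).trans hDd)
end

section
/- For every N ≥ k ≥ 1, there exists an (N,k)-strongly-selective family of size O(k² log N): i.e., a family S = (S_0, …, S_{s-1}) of subsets of [N] with s ≤ C·k²·log N (for an absolute constant C) such that for every nonempty Z ⊆ [N] with |Z| ≤ k and every z ∈ Z, there exists an index i with S_i ∩ Z = {z}. -/
open Finset in
lemma ssf_good_count (N k : ℕ) (hk : 0 < k) (Z : Finset (Fin N)) (z : Fin N) (hz : z ∈ Z) :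
    (Finset.univ.filter (fun f : Fin N → Fin k =>
      (Finset.univ.filter fun x => f x = ⟨0, hk⟩) ∩ Z = {z})).card
      = (k-1)^(Z.card - 1) * k^(N - Z.card) := by
  classical
  have hset : (Finset.univ.filter (fun f : Fin N → Fin k =>
      (Finset.univ.filter fun x => f x = ⟨0, hk⟩) ∩ Z = {z}))
      = Fintype.piFinset (fun x => if x = z then {(⟨0,hk⟩ : Fin k)}
          else if x ∈ Z then Finset.univ \ {⟨0,hk⟩} else Finset.univ) := by
    ext f
    simp only [Finset.mem_filter, Fintype.mem_piFinset, Finset.mem_univ, true_and]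
    constructor
    · intro h x
      by_cases hxz : x = z
      · subst hxz
        have : x ∈ ({x} : Finset (Fin N)) := Finset.mem_singleton_self x
        rw [← h] at this
        simp only [Finset.mem_inter, Finset.mem_filter, Finset.mem_univ, true_and] at this
        simp [this.1]
      · by_cases hxZ : x ∈ Z
        · have : x ∉ ({z} : Finset (Fin N)) := by simp [hxz]
          rw [← h] at this
          simp only [Finset.mem_inter, Finset.mem_filter, Finset.mem_univ, true_and,
            not_and] at this
          simp only [if_neg hxz, if_pos hxZ, Finset.mem_sdiff, Finset.mem_univ,
            Finset.mem_singleton, true_and]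
          exact fun hf => this hf hxZ
        · simp [hxz, hxZ]
    · intro h
      ext x
      simp only [Finset.mem_inter, Finset.mem_filter, Finset.mem_univ, true_and,
        Finset.mem_singleton]
      constructor
      · rintro ⟨hf0, hxZ⟩
        by_contra hxz
        have := h x
        simp [hxz, hxZ] at this
        exact this hf0
      · intro hxeq
        subst hxeq
        have := h x
        simp at this
        exact ⟨this, hz⟩
  rw [hset, Fintype.card_piFinset]
  have hcard : ∀ x : Fin N, ((if x = z then {(⟨0,hk⟩ : Fin k)}
      else if x ∈ Z then Finset.univ \ {⟨0,hk⟩} else Finset.univ) : Finset (Fin k)).card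
      = if x = z then 1 else if x ∈ Z then k - 1 else k := by
    intro x
    by_cases hxz : x = z <;> by_cases hxZ : x ∈ Z <;>
      simp [hxz, hxZ, Finset.card_sdiff_of_subset, Finset.card_univ]
  simp only [hcard]
  rw [← Finset.prod_mul_prod_compl Z]
  have h1 : ∏ x ∈ Z, (if x = z then 1 else if x ∈ Z then k - 1 else k)
      = (k-1)^(Z.card - 1) := by
    rw [← Finset.mul_prod_erase Z _ hz]
    simp only [if_pos rfl, one_mul]
    have : ∀ x ∈ Z.erase z, (if x = z then 1 else if x ∈ Z then k - 1 else k) = k - 1 := by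
      intro x hx
      have hx1 := Finset.mem_erase.1 hx
      simp [hx1.1, hx1.2]
    rw [Finset.prod_congr rfl this, Finset.prod_const, Finset.card_erase_of_mem hz]
    simp
  have h2 : ∏ x ∈ Zᶜ, (if x = z then 1 else if x ∈ Z then k - 1 else k)
      = k^(N - Z.card) := by
    have : ∀ x ∈ Zᶜ, (if x = z then 1 else if x ∈ Z then k - 1 else k) = k := by
      intro x hx
      have hx1 := Finset.mem_compl.1 hx
      have hne : x ≠ z := fun h => hx1 (h ▸ hz)
      simp [hne, hx1]
    rw [Finset.prod_congr rfl this, Finset.prod_const, Finset.card_compl, Fintype.card_fin]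
  rw [h1, h2]

lemma ssf_mono (N k c : ℕ) (hc : 1 ≤ c) (hck : c ≤ k) (hkN : k ≤ N) :
    (k-1)^(k-1) * k^(N-k) ≤ (k-1)^(c-1) * k^(N-c) := by
  have h1 : (k-1)^(k-1) = (k-1)^(c-1) * (k-1)^(k-c) := by
    rw [← pow_add]; congr 1; omega
  have h2 : k^(N-c) = k^(k-c) * k^(N-k) := by
    rw [← pow_add]; congr 1; omega
  rw [h1, h2, mul_assoc]
  exact Nat.mul_le_mul_left _ (Nat.mul_le_mul_right _ (Nat.pow_le_pow_left (Nat.sub_le k 1) _))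

lemma ssf_exists (N k s : ℕ) (hk : 0 < k) (hkN : k ≤ N)
    (hineq : ((Finset.univ.filter
        (fun p : Finset (Fin N) × Fin N => p.2 ∈ p.1 ∧ p.1.card ≤ k)).card)
        * (k^N - (k-1)^(k-1)*k^(N-k))^s < (k^N)^s) :
    ∃ S : Fin s → Finset (Fin N), ∀ Z : Finset (Fin N), Z.Nonempty → Z.card ≤ k →
      ∀ z ∈ Z, ∃ i : Fin s, S i ∩ Z = {z} := by
  classical
  set B := k^N - (k-1)^(k-1)*k^(N-k) with hB
  set pairs : Finset (Finset (Fin N) × Fin N) :=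
    Finset.univ.filter (fun p => p.2 ∈ p.1 ∧ p.1.card ≤ k) with hpairs
  set bad : (Finset (Fin N) × Fin N) → Finset (Fin s → Fin N → Fin k) := fun p =>
    Finset.univ.filter (fun ω => ∀ i,
      ¬ ((Finset.univ.filter fun x => ω i x = ⟨0,hk⟩) ∩ p.1 = {p.2})) with hbad
  have hbadcard : ∀ p ∈ pairs, (bad p).card ≤ B^s := by
    intro p hp
    rw [hpairs, Finset.mem_filter] at hp
    obtain ⟨-, hzp, hcard⟩ := hp
    obtain ⟨Z0, z0⟩ := p
    simp only at hzp hcard ⊢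
    have hc1 : 1 ≤ Z0.card := Finset.card_pos.2 ⟨z0, hzp⟩
    set Bset : Finset (Fin N → Fin k) := Finset.univ.filter (fun f =>
      ¬ ((Finset.univ.filter fun x => f x = ⟨0,hk⟩) ∩ Z0 = {z0})) with hBset
    have heq : bad (Z0, z0) = Fintype.piFinset (fun _ : Fin s => Bset) := by
      ext ω
      simp only [hbad, hBset, Finset.mem_filter, Fintype.mem_piFinset, Finset.mem_univ,
        true_and]
    rw [heq, Fintype.card_piFinset_const]
    refine Nat.pow_le_pow_left ?_ s
    have hsplit : Bset.card = (Finset.univ : Finset (Fin N → Fin k)).card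
        - (Finset.univ.filter (fun f : Fin N → Fin k =>
          ((Finset.univ.filter fun x => f x = ⟨0,hk⟩) ∩ Z0 = {z0}))).card := by
      rw [hBset, Finset.filter_not, Finset.card_sdiff_of_subset (Finset.filter_subset _ _)]
    have hcardF : (Finset.univ : Finset (Fin N → Fin k)).card = k^N := by
      simp [Finset.card_univ]
    rw [hsplit, hcardF, ssf_good_count N k hk Z0 z0 hzp, hB]
    exact Nat.sub_le_sub_left (ssf_mono N k Z0.card hc1 hcard hkN) _
  have hunion : (pairs.biUnion bad).card < (Finset.univ : Finset (Fin s → Fin N → Fin k)).card := by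
    calc (pairs.biUnion bad).card ≤ ∑ p ∈ pairs, (bad p).card := Finset.card_biUnion_le
    _ ≤ ∑ _p ∈ pairs, B^s := Finset.sum_le_sum hbadcard
    _ = pairs.card * B^s := by rw [Finset.sum_const, smul_eq_mul]
    _ < (k^N)^s := hineq
    _ = (Finset.univ : Finset (Fin s → Fin N → Fin k)).card := by
        simp [Finset.card_univ, pow_mul]
  obtain ⟨ω, hω⟩ : ∃ ω, ω ∈ Finset.univ \ pairs.biUnion bad := by
    refine Finset.Nonempty.exists_mem ?_
    rw [← Finset.card_pos, Finset.card_sdiff_of_subset (Finset.subset_univ _)]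
    omega
  refine ⟨fun i => Finset.univ.filter fun x => ω i x = ⟨0,hk⟩, ?_⟩
  intro Z hZne hZk z hz
  have hp : (Z, z) ∈ pairs := by
    rw [hpairs, Finset.mem_filter]
    exact ⟨Finset.mem_univ _, hz, hZk⟩
  rw [Finset.mem_sdiff] at hω
  have hnb : ω ∉ bad (Z, z) := fun h => hω.2 (Finset.mem_biUnion.2 ⟨_, hp, h⟩)
  rw [hbad, Finset.mem_filter] at hnb
  push_neg at hnb
  exact hnb (Finset.mem_univ _)



lemma ssf_pairs_card (N k : ℕ) (hk : 0 < k) (hkN : k ≤ N) :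
    ((Finset.univ.filter
      (fun p : Finset (Fin N) × Fin N => p.2 ∈ p.1 ∧ p.1.card ≤ k)).card)
      ≤ (N+1)^(k+2) := by
  classical
  set T : Finset (Finset (Fin N)) := Finset.univ.filter (fun Z => Z.card ≤ k) with hT
  have hsub : (Finset.univ.filter
      (fun p : Finset (Fin N) × Fin N => p.2 ∈ p.1 ∧ p.1.card ≤ k))
      ⊆ T.biUnion (fun Z => {Z} ×ˢ Z) := by
    intro p hp
    rw [Finset.mem_filter] at hp
    rw [Finset.mem_biUnion]
    exact ⟨p.1, by simp [hT, hp.2.2], by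
      rw [Finset.mem_product]; exact ⟨Finset.mem_singleton_self _, hp.2.1⟩⟩
  have h1 : ((Finset.univ.filter
      (fun p : Finset (Fin N) × Fin N => p.2 ∈ p.1 ∧ p.1.card ≤ k)).card)
      ≤ T.card * k := by
    calc _ ≤ (T.biUnion (fun Z => {Z} ×ˢ Z)).card := Finset.card_le_card hsub
    _ ≤ ∑ Z ∈ T, ({Z} ×ˢ Z).card := Finset.card_biUnion_le
    _ ≤ ∑ Z ∈ T, k := Finset.sum_le_sum (fun Z hZ => by
        rw [Finset.card_product, Finset.card_singleton, one_mul]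
        exact (Finset.mem_filter.1 hZ).2)
    _ = T.card * k := by rw [Finset.sum_const, smul_eq_mul]
  have h2 : T.card ≤ (k+1) * N^k := by
    have hsub2 : T ⊆ (Finset.range (k+1)).biUnion
        (fun c => Finset.powersetCard c Finset.univ) := by
      intro Z hZ
      rw [Finset.mem_biUnion]
      refine ⟨Z.card, Finset.mem_range.2 ?_, ?_⟩
      · exact Nat.lt_succ_of_le (Finset.mem_filter.1 hZ).2
      · rw [Finset.mem_powersetCard]
        exact ⟨Finset.subset_univ _, rfl⟩
    calc T.card ≤ _ := Finset.card_le_card hsub2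
    _ ≤ ∑ c ∈ Finset.range (k+1), (Finset.powersetCard c (Finset.univ : Finset (Fin N))).card :=
        Finset.card_biUnion_le
    _ ≤ ∑ c ∈ Finset.range (k+1), N^k := Finset.sum_le_sum (fun c hc => by
        rw [Finset.card_powersetCard, Finset.card_univ, Fintype.card_fin]
        exact (Nat.choose_le_pow N c).trans
          (Nat.pow_le_pow_right (by omega) (Nat.lt_succ_iff.1 (Finset.mem_range.1 hc))))
    _ = (k+1) * N^k := by rw [Finset.sum_const, Finset.card_range, smul_eq_mul]
  calc _ ≤ T.card * k := h1
  _ ≤ (k+1) * N^k * k := Nat.mul_le_mul_right _ h2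
  _ ≤ (N+1) * (N+1)^k * (N+1) := by
      exact Nat.mul_le_mul (Nat.mul_le_mul (by omega) (Nat.pow_le_pow_left (by omega) _))
        (by omega)
  _ = (N+1)^(k+2) := by ring


-- 3 * (k-1)^(k-1) ≥ k^(k-1) in ℕ (via e < 3)
lemma ssf_three (k : ℕ) (hk : 1 ≤ k) : k^(k-1) ≤ 3*(k-1)^(k-1) := by
  obtain ⟨m, rfl⟩ : ∃ m, k = m + 1 := ⟨k - 1, by omega⟩
  simp only [Nat.add_sub_cancel]
  rcases Nat.eq_zero_or_pos m with rfl | hm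
  · simp
  -- real argument
  have hmR : (0:ℝ) < m := by exact_mod_cast hm
  have key : ((m:ℝ)+1)^m ≤ 3 * (m:ℝ)^m := by
    have h1 : ((m:ℝ)+1)^m = (m:ℝ)^m * (1 + 1/m)^m := by
      rw [← mul_pow]
      congr 1
      field_simp
    have h2 : (1 + 1/(m:ℝ))^m ≤ Real.exp (1/m) ^ m := by
      apply pow_le_pow_left₀ (by positivity)
      rw [add_comm]
      exact Real.add_one_le_exp _
    have h3 : Real.exp (1/(m:ℝ)) ^ m = Real.exp 1 := by
      rw [← Real.exp_nat_mul]
      congr 1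
      field_simp
    have h4 : Real.exp 1 ≤ 3 := by
      have := Real.exp_one_lt_d9
      linarith
    calc ((m:ℝ)+1)^m = (m:ℝ)^m * (1 + 1/m)^m := h1
    _ ≤ (m:ℝ)^m * Real.exp 1 := by
        rw [h3] at h2
        exact mul_le_mul_of_nonneg_left h2 (by positivity)
    _ ≤ 3 * (m:ℝ)^m := by
        rw [mul_comm]
        exact mul_le_mul_of_nonneg_right h4 (by positivity)
  exact_mod_cast key

-- log (N+1) ≤ 1 + log N for N ≥ 1
lemma ssf_log (N : ℕ) (hN : 1 ≤ N) : Real.log (N+1) ≤ 1 + Real.log N := by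
  have hN0 : (0:ℝ) < N := by exact_mod_cast hN
  have h1 : ((N:ℝ)+1) ≤ 2*N := by
    have : (1:ℝ) ≤ N := by exact_mod_cast hN
    linarith
  calc Real.log ((N:ℝ)+1) ≤ Real.log (2*N) :=
        Real.log_le_log (by positivity) h1
  _ = Real.log 2 + Real.log N := Real.log_mul two_ne_zero (ne_of_gt hN0)
  _ ≤ 1 + Real.log N := by
      have := Real.log_two_lt_d9
      linarith

lemma ssf_numeric (N k s : ℕ) (hk : 1 ≤ k) (hkN : k ≤ N)
    (hs : 3*(k:ℝ)*((k:ℝ)+2)*(1+Real.log N) < s) :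
    (N+1)^(k+2) * (k^N - (k-1)^(k-1)*k^(N-k))^s < (k^N)^s := by
  have hN : 1 ≤ N := le_trans hk hkN
  -- g ≤ k^N in ℕ
  have hgle : (k-1)^(k-1)*k^(N-k) ≤ k^N := by
    calc (k-1)^(k-1)*k^(N-k) ≤ k^(k-1)*k^(N-k) :=
          Nat.mul_le_mul_right _ (Nat.pow_le_pow_left (Nat.sub_le k 1) _)
    _ = k^(k-1+(N-k)) := by rw [pow_add]
    _ ≤ k^N := Nat.pow_le_pow_right hk (by omega)
  -- k^N ≤ 3*k*g in ℕ
  have hKg : k^N ≤ 3*k*((k-1)^(k-1)*k^(N-k)) := by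
    calc k^N = k^(k-1) * (k * k^(N-k)) := by
          rw [← pow_succ', ← pow_add]; congr 1; omega
    _ ≤ 3*(k-1)^(k-1) * (k * k^(N-k)) := Nat.mul_le_mul_right _ (ssf_three k hk)
    _ = 3*k*((k-1)^(k-1)*k^(N-k)) := by ring
  -- move to ℝ
  rw [← Nat.cast_lt (α := ℝ)]
  push_cast [Nat.cast_sub hgle, Nat.cast_sub hk]
  set K : ℝ := (k:ℝ)^N with hKdef
  set g : ℝ := ((k:ℝ)-1)^(k-1) * (k:ℝ)^(N-k) with hgdef
  have hkR : (1:ℝ) ≤ k := by exact_mod_cast hk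
  have hK0 : 0 < K := by positivity
  have hg0 : 0 ≤ g := by
    have : (0:ℝ) ≤ (k:ℝ)-1 := by linarith
    positivity
  have hgleR : g ≤ K := by
    have := hgle
    have hcast : (((k-1)^(k-1)*k^(N-k) : ℕ) : ℝ) = g := by
      push_cast [Nat.cast_sub hk]
      ring
    rw [← hcast, hKdef]
    exact_mod_cast this
  have hKgR : K ≤ 3*(k:ℝ)*g := by
    have hcast : (((k-1)^(k-1)*k^(N-k) : ℕ) : ℝ) = g := by
      push_cast [Nat.cast_sub hk]
      ring
    calc K = ((k^N : ℕ):ℝ) := by push_cast [hKdef]; ring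
    _ ≤ ((3*k*((k-1)^(k-1)*k^(N-k)) : ℕ):ℝ) := by exact_mod_cast hKg
    _ = 3*(k:ℝ)*g := by push_cast [Nat.cast_sub hk]; ring
  -- key ratio bound : K - g ≤ K * exp (-(1/(3k)))
  have hratio : K - g ≤ K * Real.exp (-(1/(3*k))) := by
    have h1 : K - g ≤ K * (1 - 1/(3*k)) := by
      have h3k : (0:ℝ) < 3*k := by linarith
      have hKd : K * (1/(3*k)) ≤ g := by
        rw [mul_one_div, div_le_iff₀ h3k]
        nlinarith [hKgR]
      nlinarith [hKd, hK0, h3k]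
    have h2 : (1:ℝ) - 1/(3*k) ≤ Real.exp (-(1/(3*k))) := by
      have := Real.add_one_le_exp (-(1/(3*(k:ℝ))))
      linarith
    calc K - g ≤ K * (1 - 1/(3*k)) := h1
    _ ≤ K * Real.exp (-(1/(3*k))) := mul_le_mul_of_nonneg_left h2 (le_of_lt hK0)
  -- conclusion
  have hb0 : 0 ≤ K - g := by linarith
  have hpow : (K - g)^s ≤ K^s * Real.exp (-(1/(3*k)))^s := by
    rw [← mul_pow]
    exact pow_le_pow_left₀ hb0 hratio s
  have hexp : ((N:ℝ)+1)^(k+2) * Real.exp (-(1/(3*(k:ℝ))))^s < 1 := by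
    have e1 : ((N:ℝ)+1)^(k+2) = Real.exp (((k:ℝ)+2) * Real.log ((N:ℝ)+1)) := by
      rw [← Real.exp_log (show (0:ℝ) < ((N:ℝ)+1)^(k+2) by positivity)]
      congr 1
      rw [Real.log_pow]
      push_cast
      ring
    have e2 : Real.exp (-(1/(3*(k:ℝ))))^s = Real.exp ((s:ℝ) * (-(1/(3*(k:ℝ))))) := by
      rw [← Real.exp_nat_mul]
    rw [e1, e2, ← Real.exp_add, Real.exp_lt_one_iff]
    have hlog := ssf_log N hN
    have h3k : (0:ℝ) < 3*(k:ℝ) := by positivity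
    have hmul : 3*(k:ℝ)*((k:ℝ)+2)*Real.log ((N:ℝ)+1) ≤ 3*(k:ℝ)*((k:ℝ)+2)*(1+Real.log N) :=
      mul_le_mul_of_nonneg_left hlog (by positivity)
    have hlt : 3*(k:ℝ)*((k:ℝ)+2)*Real.log ((N:ℝ)+1) < s := lt_of_le_of_lt hmul hs
    have hdiv : ((k:ℝ)+2)*Real.log ((N:ℝ)+1) < (s:ℝ)/(3*(k:ℝ)) := by
      rw [lt_div_iff₀ h3k]
      nlinarith [hlt]
    have hid : (s:ℝ)*(-(1/(3*(k:ℝ)))) = -((s:ℝ)/(3*(k:ℝ))) := by ring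
    linarith [hdiv, hid.le, hid.ge]
  calc ((N:ℝ)+1)^(k+2) * (K - g)^s
      ≤ ((N:ℝ)+1)^(k+2) * (K^s * Real.exp (-(1/(3*k)))^s) := by
        apply mul_le_mul_of_nonneg_left hpow (by positivity)
  _ = K^s * (((N:ℝ)+1)^(k+2) * Real.exp (-(1/(3*k)))^s) := by ring
  _ < K^s * 1 := by
      apply mul_lt_mul_of_pos_left hexp (by positivity)
  _ = K^s := mul_one _

/-- For every N ≥ k ≥ 1 there exists an (N,k)-strongly-selective family of
size O(k² log N): a family S₀, …, S_{s-1} of subsets of [N] with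
s ≤ C·k²·(1 + log N) for an absolute constant C > 0, such that for every
nonempty Z ⊆ [N] with |Z| ≤ k and every z ∈ Z there is an index i with
S_i ∩ Z = {z}. -/
theorem stmt_12 :
    ∃ C : ℝ, 0 < C ∧
      ∀ N k : ℕ, 1 ≤ k → k ≤ N →
        ∃ (s : ℕ) (S : Fin s → Finset (Fin N)),
          (s : ℝ) ≤ C * (k : ℝ) ^ 2 * (1 + Real.log N) ∧
          ∀ Z : Finset (Fin N), Z.Nonempty → Z.card ≤ k →
            ∀ z ∈ Z, ∃ i : Fin s, S i ∩ Z = {z} := by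
  refine ⟨20, by norm_num, ?_⟩
  intro N k hk hkN
  have hN : 1 ≤ N := le_trans hk hkN
  have hk1 : (1:ℝ) ≤ k := by exact_mod_cast hk
  have hlogN : (0:ℝ) ≤ Real.log N := Real.log_natCast_nonneg N
  set x : ℝ := 3*(k:ℝ)*((k:ℝ)+2)*(1+Real.log N) with hx
  have hx0 : 0 ≤ x := by positivity
  set s : ℕ := ⌈x⌉₊ + 1 with hsdef
  have hsgt : x < s := by
    have := Nat.le_ceil x
    have h2 : ((⌈x⌉₊ : ℕ) : ℝ) + 1 = (s:ℝ) := by rw [hsdef]; push_cast; ring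
    linarith
  have hsle : (s:ℝ) ≤ 20 * (k:ℝ)^2 * (1 + Real.log N) := by
    have hceil : (⌈x⌉₊ : ℝ) < x + 1 := Nat.ceil_lt_add_one hx0
    have h2 : (s:ℝ) = ((⌈x⌉₊ : ℕ) : ℝ) + 1 := by rw [hsdef]; push_cast; ring
    have hxle : x ≤ 9 * (k:ℝ)^2 * (1 + Real.log N) := by
      rw [hx]
      nlinarith [hk1, hlogN]
    nlinarith [hceil, hxle, hk1, hlogN]
  obtain ⟨S, hS⟩ := ssf_exists N k s hk hkN (by
    calc ((Finset.univ.filter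
        (fun p : Finset (Fin N) × Fin N => p.2 ∈ p.1 ∧ p.1.card ≤ k)).card)
        * (k^N - (k-1)^(k-1)*k^(N-k))^s
        ≤ (N+1)^(k+2) * (k^N - (k-1)^(k-1)*k^(N-k))^s :=
          Nat.mul_le_mul_right _ (ssf_pairs_card N k hk hkN)
    _ < (k^N)^s := ssf_numeric N k s hk hkN hsgt)
  exact ⟨s, S, hsle, hS⟩
end

section
/- Consider a process on n elements where each element v has pointers M(v) forming a rooted forest (edges directed child→parent, roots are the leaders L(v)=true) and groups G partition the element set with each tree being one group. If at the end of a block, merging pairs are defined by: match(v) = u iff u = min(X_v), v = min(X_u) and both are leaders; and when matched, exactly the larger-ID one of {u, v} ceases to be a leader and points to the other. Then after the merge step: (1) matching is symmetric (match(v)=u ↔ match(u)=v); (2) the groups of each matched pair are replaced by their union; (3) the leaders' groups still partition the element set (integrity is preserved). -/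
/-- Two leaders v, u are matched if each is the minimum of the other's
hearing record: u = min X_v and v = min X_u, v ≠ u. -/
def matched {V : Type*} [Fintype V] [LinearOrder V]
    (L : V → Prop) (X : V → Finset V) (v u : V) : Prop :=
  L v ∧ L u ∧ v ≠ u ∧ (X v).min = (u : WithTop V) ∧ (X u).min = (v : WithTop V)

/-- Invariant preservation of the merge step: given that the leaders' groups
partition all elements, and after the merge (i) the larger element of each
matched pair ceases to be a leader (L' v ↔ L v and every match partner of v
is larger), (ii) the group of a matched element becomes the union of the two
groups, and (iii) unmatched elements keep their groups, then:
(1) matching is symmetric; (2) for each matched pair v < u, v stays a leader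
with group G v ∪ G u while u ceases to be a leader; (3) the new leaders'
groups still partition the element set. -/
theorem stmt_15 {V : Type*} [Fintype V] [LinearOrder V]
    (L L' : V → Prop) (G G' : V → Finset V) (X : V → Finset V)
    (hpart : ∀ w : V, ∃! v : V, L v ∧ w ∈ G v)
    (hL' : ∀ v, L' v ↔ (L v ∧ ∀ u, matched L X v u → v < u))
    (hG'merge : ∀ v u, matched L X v u → G' v = G v ∪ G u)
    (hG'keep : ∀ v, (∀ u, ¬ matched L X v u) → G' v = G v) :
    (∀ v u, matched L X v u ↔ matched L X u v) ∧
    (∀ v u, matched L X v u → v < u →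
      L' v ∧ ¬ L' u ∧ G' v = G v ∪ G u) ∧
    (∀ w : V, ∃! v : V, L' v ∧ w ∈ G' v) := by
  classical
  have hsym : ∀ v u, matched L X v u ↔ matched L X u v := by
    intro v u
    constructor <;> rintro ⟨h1, h2, h3, h4, h5⟩ <;> exact ⟨h2, h1, h3.symm, h5, h4⟩
  have huniq : ∀ v u u', matched L X v u → matched L X v u' → u = u' := by
    intro v u u' h h'
    have : (u : WithTop V) = (u' : WithTop V) := h.2.2.2.1.symm.trans h'.2.2.2.1
    exact_mod_cast this
  refine ⟨hsym, ?_, ?_⟩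
  · intro v u hm hlt
    refine ⟨?_, ?_, hG'merge v u hm⟩
    · exact (hL' v).mpr ⟨hm.1, fun u' hu' => (huniq v u u' hm hu') ▸ hlt⟩
    · intro h
      have := ((hL' u).mp h).2 v ((hsym v u).mp hm)
      exact absurd this (not_lt.mpr hlt.le)
  · intro w
    obtain ⟨v₀, ⟨hLv₀, hwv₀⟩, hv₀uniq⟩ := hpart w
    by_cases hm : ∃ u, matched L X v₀ u
    · obtain ⟨u, hu⟩ := hm
      rcases lt_or_gt_of_ne hu.2.2.1 with hlt | hgt
      · -- v₀ < u : v₀ stays leader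
        refine ⟨v₀, ⟨(hL' v₀).mpr ⟨hLv₀, fun u' hu' => (huniq v₀ u u' hu hu') ▸ hlt⟩, ?_⟩, ?_⟩
        · rw [hG'merge v₀ u hu]; exact Finset.mem_union_left _ hwv₀
        · rintro v' ⟨hLv', hwv'⟩
          have hLv'' := ((hL' v').mp hLv').1
          by_cases hm' : ∃ u'', matched L X v' u''
          · obtain ⟨u'', hu''⟩ := hm'
            have hlt' : v' < u'' := ((hL' v').mp hLv').2 u'' hu''
            rw [hG'merge v' u'' hu''] at hwv'
            rcases Finset.mem_union.mp hwv' with h | h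
            · exact hv₀uniq v' ⟨hLv'', h⟩
            · have heq : u'' = v₀ := hv₀uniq u'' ⟨hu''.2.1, h⟩
              have hvu : v' = u := huniq v₀ v' u ((hsym v' v₀).mp (heq ▸ hu'')) hu
              rw [hvu, heq] at hlt'
              exact absurd hlt (not_lt.mpr hlt'.le)
          · rw [hG'keep v' (not_exists.mp hm')] at hwv'
            exact hv₀uniq v' ⟨hLv'', hwv'⟩
      · -- u < v₀ : u becomes the leader
        have huv₀ : matched L X u v₀ := (hsym v₀ u).mp hu
        refine ⟨u, ⟨(hL' u).mpr ⟨hu.2.1, fun u' hu' => (huniq u v₀ u' huv₀ hu') ▸ hgt⟩, ?_⟩, ?_⟩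
        · rw [hG'merge u v₀ huv₀]; exact Finset.mem_union_right _ hwv₀
        · rintro v' ⟨hLv', hwv'⟩
          have hLv'' := ((hL' v').mp hLv').1
          by_cases hm' : ∃ u'', matched L X v' u''
          · obtain ⟨u'', hu''⟩ := hm'
            have hlt' : v' < u'' := ((hL' v').mp hLv').2 u'' hu''
            rw [hG'merge v' u'' hu''] at hwv'
            rcases Finset.mem_union.mp hwv' with h | h
            · have heq : v' = v₀ := hv₀uniq v' ⟨hLv'', h⟩
              have hequ : u'' = u := huniq v₀ u'' u (heq ▸ hu'') hu
              rw [heq, hequ] at hlt'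
              exact absurd hlt' (not_lt.mpr hgt.le)
            · have heq : u'' = v₀ := hv₀uniq u'' ⟨hu''.2.1, h⟩
              exact huniq v₀ v' u ((hsym v' v₀).mp (heq ▸ hu'')) hu
          · rw [hG'keep v' (not_exists.mp hm')] at hwv'
            have heq : v' = v₀ := hv₀uniq v' ⟨hLv'', hwv'⟩
            exact absurd (heq.symm ▸ hu) (not_exists.mp hm' u)
    · -- v₀ unmatched
      have hnm := not_exists.mp hm
      refine ⟨v₀, ⟨(hL' v₀).mpr ⟨hLv₀, fun u' hu' => absurd hu' (hnm u')⟩, ?_⟩, ?_⟩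
      · rw [hG'keep v₀ hnm]; exact hwv₀
      · rintro v' ⟨hLv', hwv'⟩
        have hLv'' := ((hL' v').mp hLv').1
        by_cases hm' : ∃ u'', matched L X v' u''
        · obtain ⟨u'', hu''⟩ := hm'
          rw [hG'merge v' u'' hu''] at hwv'
          rcases Finset.mem_union.mp hwv' with h | h
          · have heq : v' = v₀ := hv₀uniq v' ⟨hLv'', h⟩
            exact absurd (heq ▸ hu'') (hnm u'')
          · have heq : u'' = v₀ := hv₀uniq u'' ⟨hu''.2.1, h⟩
            exact absurd ((hsym v' v₀).mp (heq ▸ hu'')) (hnm v')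
        · rw [hG'keep v' (not_exists.mp hm')] at hwv'
          exact hv₀uniq v' ⟨hLv'', hwv'⟩
end
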